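/- Let μ > 0, σ > 0 and set r = σ/μ. Then for every randomized pricing mechanism A (probability measure on [0,∞)), sup_{F ∈ 𝔽_{μ,σ}} OPT(F)/REV(A;F) ≥ 1 + ln(1+r²). Equivalently, for every A and every δ > 0 there exists F ∈ 𝔽_{μ,σ} with OPT(F) ≥ (1 + ln(1+r²) − δ)·REV(A;F). -/

import Mathlib

open MeasureTheory

/-- Revenue of posting price `p` against valuation distribution `F`:
`REV(p;F) = p · P(X ≥ p)`. -/
noncomputable def rev (F : Measure ℝ) (p : ℝ) : ℝ :=
  p * (F (Set.Ici p)).toReal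

/-- Optimal revenue `OPT(F) = sup_{p ≥ 0} p · P(X ≥ p)`. -/
noncomputable def opt (F : Measure ℝ) : ℝ :=
  ⨆ p ∈ Set.Ici (0 : ℝ), rev F p

/-- Revenue of a randomized pricing mechanism `A` (a measure over prices):
`REV(A;F) = E_{p∼A}[REV(p;F)]`. -/
noncomputable def mrev (A F : Measure ℝ) : ℝ :=
  ∫ p, rev F p ∂A

/-- `F` is a `(μ,σ)`-distributed distribution: a probability measure on `[0,∞)`
with mean `m` and variance at most `s²`. -/
structure MeanVarLe (F : Measure ℝ) (m s : ℝ) : Prop where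
  prob : IsProbabilityMeasure F
  supp : F (Set.Iio 0) = 0
  int_mean : Integrable (fun x => x) F
  int_sq : Integrable (fun x => x ^ 2) F
  mean : ∫ x, x ∂F = m
  var_le : ∫ x, (x - m) ^ 2 ∂F ≤ s ^ 2

/-- A randomized pricing mechanism: a probability measure over prices in `[0,∞)`. -/
def IsPriceMech (A : Measure ℝ) : Prop :=
  IsProbabilityMeasure A ∧ A (Set.Iio 0) = 0

/-! Against a mechanism `A`, play the two-point distribution with mass `μ/v` at `v` and the rest
at `0`; for `v ∈ [μ, V]`, `V = μ(1 + r²)`, it lies in `𝔽_{μ,σ}`. Its optimal revenue is `μ`,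
while `A` earns `(μ/v) G(v)` with `G(v) = ∫_{(0,v]} p dA`. If `A` achieved ratio `c` against all
of them, then `G > id / c` on `[μ, V]`, and each step `w < w'` of a fine geometric grid from `μ`
to `V` forces `A (w, w'] ≥ G(w')/w' - G(w)/w + (1 - w/w')/c`. Telescoping gives
`1 ≥ A (0, V] ≥ (1 + log (V/μ) - o(1)) / c`. -/

open Set

noncomputable def twoPoint (q v : ℝ) : Measure ℝ :=
  ENNReal.ofReal (1 - q) • Measure.dirac 0 + ENNReal.ofReal q • Measure.dirac v

section TwoPoint

variable {q v : ℝ}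

lemma twoPoint_apply (s : Set ℝ) :
    twoPoint q v s =
      ENNReal.ofReal (1 - q) * s.indicator 1 0 + ENNReal.ofReal q * s.indicator 1 v := by
  simp [twoPoint, Measure.dirac_apply]

lemma integrable_twoPoint (f : ℝ → ℝ) : Integrable f (twoPoint q v) :=
  ((integrable_dirac enorm_lt_top).smul_measure ENNReal.ofReal_ne_top).add_measure
    ((integrable_dirac enorm_lt_top).smul_measure ENNReal.ofReal_ne_top)

lemma integral_twoPoint (hq₀ : 0 ≤ q) (hq₁ : q ≤ 1) (f : ℝ → ℝ) :
    ∫ x, f x ∂twoPoint q v = (1 - q) * f 0 + q * f v := by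
  rw [twoPoint, integral_add_measure
      ((integrable_dirac enorm_lt_top).smul_measure ENNReal.ofReal_ne_top)
      ((integrable_dirac enorm_lt_top).smul_measure ENNReal.ofReal_ne_top),
    integral_smul_measure, integral_smul_measure, integral_dirac, integral_dirac,
    ENNReal.toReal_ofReal (by linarith), ENNReal.toReal_ofReal hq₀, smul_eq_mul, smul_eq_mul]

lemma isProbabilityMeasure_twoPoint (hq₀ : 0 ≤ q) (hq₁ : q ≤ 1) :
    IsProbabilityMeasure (twoPoint q v) := by
  constructor
  rw [twoPoint_apply, indicator_univ, Pi.one_apply, Pi.one_apply, mul_one, mul_one,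
    ← ENNReal.ofReal_add (by linarith) hq₀, sub_add_cancel, ENNReal.ofReal_one]

lemma twoPoint_Ici {p : ℝ} (hp : 0 < p) :
    twoPoint q v (Ici p) = if p ≤ v then ENNReal.ofReal q else 0 := by
  rw [twoPoint_apply, indicator_of_notMem (by simpa using hp)]
  split_ifs with hpv
  · simp [indicator_of_mem (show v ∈ Ici p from hpv)]
  · simp [indicator_of_notMem (show v ∉ Ici p from hpv)]

lemma rev_twoPoint (hq : 0 ≤ q) {p : ℝ} (hp : 0 ≤ p) :
    rev (twoPoint q v) p = q * (Ioc 0 v).indicator id p := by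
  rcases hp.eq_or_lt with rfl | hp
  · simp [rev]
  rw [rev, twoPoint_Ici hp]
  split_ifs with hpv
  · rw [indicator_of_mem (show p ∈ Ioc 0 v from ⟨hp, hpv⟩), ENNReal.toReal_ofReal hq, id,
      mul_comm]
  · rw [indicator_of_notMem fun h => hpv h.2]
    simp

lemma twoPoint_meanVarLe {m s : ℝ} (hm : 0 < m) (hv : m ≤ v) (hvar : m * v - m ^ 2 ≤ s ^ 2) :
    MeanVarLe (twoPoint (m / v) v) m s := by
  have hv₀ : 0 < v := hm.trans_le hv
  have hq₀ : 0 ≤ m / v := by positivity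
  have hq₁ : m / v ≤ 1 := (div_le_one hv₀).2 hv
  refine ⟨isProbabilityMeasure_twoPoint hq₀ hq₁, ?_, integrable_twoPoint _,
    integrable_twoPoint _, ?_, ?_⟩
  · simp [twoPoint_apply, hv₀.not_gt]
  · rw [integral_twoPoint hq₀ hq₁]
    field_simp
    ring
  · rw [integral_twoPoint hq₀ hq₁]
    convert hvar using 1
    field_simp
    ring

end TwoPoint

lemma rev_le_opt {F : Measure ℝ} {B p : ℝ} (hB : ∀ p, 0 ≤ p → rev F p ≤ B) (hp : 0 ≤ p) :
    rev F p ≤ opt F := by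
  have hbdd : BddAbove (range fun p => ⨆ _ : p ∈ Ici (0 : ℝ), rev F p) :=
    ⟨max B 0, forall_mem_range.2 fun p =>
      Real.iSup_le (fun hp => (hB p hp).trans (le_max_left _ _)) (le_max_right _ _)⟩
  exact le_ciSup_of_le hbdd p (by rw [ciSup_pos (show p ∈ Ici 0 from hp)])

lemma le_opt_twoPoint {m v : ℝ} (hm : 0 < m) (hv : m ≤ v) : m ≤ opt (twoPoint (m / v) v) := by
  have hv₀ : 0 < v := hm.trans_le hv
  have hq : 0 ≤ m / v := by positivity
  have hind : ∀ p, (Ioc 0 v).indicator id p ≤ v := fun p => by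
    by_cases h : p ∈ Ioc 0 v
    · simpa [indicator_of_mem h] using h.2
    · simpa [indicator_of_notMem h] using hv₀.le
  have hrev : ∀ p, 0 ≤ p → rev (twoPoint (m / v) v) p ≤ m := fun p hp => by
    rw [rev_twoPoint hq hp]
    calc m / v * (Ioc 0 v).indicator id p ≤ m / v * v := by gcongr; exact hind p
      _ = m := div_mul_cancel₀ m hv₀.ne'
  calc m = rev (twoPoint (m / v) v) v := by
        rw [rev_twoPoint hq hv₀.le, indicator_of_mem (show v ∈ Ioc 0 v from ⟨hv₀, le_rfl⟩), id,
          div_mul_cancel₀ m hv₀.ne']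
    _ ≤ _ := rev_le_opt hrev hv₀.le

section PartialMean

variable (A : Measure ℝ)

noncomputable def partialMean (v : ℝ) : ℝ :=
  ∫ x in Ioc 0 v, x ∂A

lemma mrev_twoPoint (hA : A (Iio 0) = 0) {q : ℝ} (hq : 0 ≤ q) (v : ℝ) :
    mrev A (twoPoint q v) = q * partialMean A v := by
  have hnonneg : ∀ᵐ p ∂A, 0 ≤ p := ae_iff.2 (by simp only [not_le]; exact hA)
  rw [mrev, integral_congr_ae (hnonneg.mono fun p hp => rev_twoPoint hq hp),
    integral_const_mul, integral_indicator measurableSet_Ioc]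
  rfl

lemma partialMean_nonneg (v : ℝ) : 0 ≤ partialMean A v :=
  setIntegral_nonneg measurableSet_Ioc fun _ hx => hx.1.le

variable [IsFiniteMeasure A]

lemma integrableOn_id_Ioc (a b : ℝ) : IntegrableOn (fun x => x) (Ioc a b) A :=
  continuous_id.integrableOn_Icc.mono_set Ioc_subset_Icc_self

lemma partialMean_add {a b : ℝ} (ha : 0 ≤ a) (hab : a ≤ b) :
    partialMean A b = partialMean A a + ∫ x in Ioc a b, x ∂A := by
  rw [partialMean, partialMean, ← setIntegral_union (Ioc_disjoint_Ioc_of_le le_rfl)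
    measurableSet_Ioc (integrableOn_id_Ioc A 0 a) (integrableOn_id_Ioc A a b),
    Ioc_union_Ioc_eq_Ioc ha hab]

lemma setIntegral_Ioc_le_mul_measureReal (a b : ℝ) :
    ∫ x in Ioc a b, x ∂A ≤ b * A.real (Ioc a b) := by
  calc ∫ x in Ioc a b, x ∂A ≤ ∫ _ in Ioc a b, b ∂A :=
        setIntegral_mono_on (integrableOn_id_Ioc A a b) (integrableOn_const (measure_ne_top _ _))
          measurableSet_Ioc fun _ hx => hx.2
    _ = b * A.real (Ioc a b) := by rw [setIntegral_const, smul_eq_mul, mul_comm]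

lemma partialMean_div_le_measureReal {v : ℝ} (hv : 0 < v) :
    partialMean A v / v ≤ A.real (Ioc 0 v) := by
  rw [div_le_iff₀ hv, mul_comm]
  exact setIntegral_Ioc_le_mul_measureReal A 0 v

lemma le_measureReal_Ioc_of_le_mul_partialMean {a b c : ℝ} (ha : 0 < a) (hab : a ≤ b)
    (hc : 0 < c) (hac : a ≤ c * partialMean A a) :
    partialMean A b / b - partialMean A a / a + (1 - a / b) / c ≤ A.real (Ioc a b) := by
  have hb : 0 < b := ha.trans_le hab
  have hI := setIntegral_Ioc_le_mul_measureReal A a b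
  rw [partialMean_add A ha.le hab]
  set G := partialMean A a
  set I := ∫ x in Ioc a b, x ∂A
  have hG : (1 - a / b) / c ≤ G * (1 / a - 1 / b) := by
    rw [div_le_iff₀ hc]
    calc 1 - a / b = a * (1 / a - 1 / b) := by field_simp
      _ ≤ c * G * (1 / a - 1 / b) := by
          gcongr
          rw [sub_nonneg]
          exact one_div_le_one_div_of_le ha hab
      _ = _ := by ring
  calc (G + I) / b - G / a + (1 - a / b) / c ≤ (G + I) / b - G / a + G * (1 / a - 1 / b) := by
        gcongr
    _ = I / b := by field_simp; ring
    _ ≤ A.real (Ioc a b) := by rw [div_le_iff₀ hb, mul_comm]; exact hI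

lemma le_measureReal_Ioc_zero_of_le_mul_partialMean {w : ℕ → ℝ} (hw₀ : 0 < w 0)
    (hw : Monotone w) {c : ℝ} (hc : 0 < c) {n : ℕ}
    (hG : ∀ k ≤ n, w k ≤ c * partialMean A (w k)) :
    partialMean A (w n) / w n + (∑ k ∈ Finset.range n, (1 - w k / w (k + 1))) / c ≤
      A.real (Ioc 0 (w n)) := by
  induction n with
  | zero => simpa using partialMean_div_le_measureReal A hw₀
  | succ n ih =>
    have hpos : 0 < w n := hw₀.trans_le (hw n.zero_le)
    have hsplit : A.real (Ioc 0 (w (n + 1))) =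
        A.real (Ioc 0 (w n)) + A.real (Ioc (w n) (w (n + 1))) := by
      rw [← measureReal_union (Ioc_disjoint_Ioc_of_le le_rfl) measurableSet_Ioc,
        Ioc_union_Ioc_eq_Ioc hpos.le (hw n.le_succ)]
    have hstep :=
      le_measureReal_Ioc_of_le_mul_partialMean A hpos (hw n.le_succ) hc (hG n n.le_succ)
    have hprev := ih fun k hk => hG k (hk.trans n.le_succ)
    rw [Finset.sum_range_succ, add_div, hsplit]
    linarith

end PartialMean

lemma exists_lt_nat_mul_one_sub_exp {L t : ℝ} (hL : 0 < L) (ht : t < L) :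
    ∃ n : ℕ, 0 < n ∧ t < n * (1 - Real.exp (-(L / n))) := by
  obtain ⟨n, hn⟩ := exists_nat_gt (max (t * L / (L - t)) 0)
  have hn₀ : (0 : ℝ) < n := (le_max_right _ _).trans_lt hn
  refine ⟨n, Nat.cast_pos.1 hn₀, ?_⟩
  set x := L / n
  have hx : 0 < x := by positivity
  have hexp : Real.exp (-x) ≤ 1 / (1 + x) := by
    rw [Real.exp_neg, ← one_div]
    exact one_div_le_one_div_of_le (by positivity) (by linarith [Real.add_one_le_exp x])
  -- `n (1 - 1/(1+x)) = nL/(n+L)`, which exceeds `t` exactly when `n > tL/(L-t)`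
  have hbound : t < n * (1 - 1 / (1 + x)) := by
    have h := (le_max_left _ _).trans_lt hn
    rw [div_lt_iff₀ (by linarith)] at h
    have : n * (1 - 1 / (1 + x)) = n * L / (n + L) := by
      simp only [x]
      field_simp
      ring
    rw [this, lt_div_iff₀ (by positivity)]
    linarith
  calc t < n * (1 - 1 / (1 + x)) := hbound
    _ ≤ n * (1 - Real.exp (-x)) := by gcongr

lemma exists_mul_partialMean_le (A : Measure ℝ) [IsProbabilityMeasure A] {m V c : ℝ}
    (hm : 0 < m) (hV : m < V) (hc : c < 1 + Real.log (V / m)) :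
    ∃ v ∈ Icc m V, c * partialMean A v ≤ v := by
  by_contra! h
  have hc₀ : 0 < c := by
    have := h m ⟨le_rfl, hV.le⟩
    nlinarith [partialMean_nonneg A m]
  set L := Real.log (V / m)
  have hL : 0 < L := Real.log_pos ((one_lt_div hm).2 hV)
  obtain ⟨n, hn, hlt⟩ := exists_lt_nat_mul_one_sub_exp hL (show c - 1 < L by linarith)
  set w : ℕ → ℝ := fun k => m * Real.exp (k * (L / n))
  have hw : Monotone w := fun j k hjk => by
    simp only [w]
    gcongr
  have hwn : w n = V := by
    simp only [w]
    rw [mul_div_cancel₀ _ (by positivity), Real.exp_log (div_pos (hm.trans hV) hm)]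
    field_simp
  have hmem : ∀ k ≤ n, w k ∈ Icc m V := fun k hk =>
    ⟨by simpa [w] using le_mul_of_one_le_right hm.le (Real.one_le_exp (by positivity)),
      hwn ▸ hw hk⟩
  have hratio : ∀ k, w k / w (k + 1) = Real.exp (-(L / n)) := fun k => by
    simp only [w]
    rw [mul_div_mul_left _ _ hm.ne', ← Real.exp_sub]
    push_cast
    ring_nf
  have hgrid := le_measureReal_Ioc_zero_of_le_mul_partialMean A (hw₀ := by positivity) hw hc₀
    (fun k hk => (h _ (hmem k hk)).le)
  simp only [hratio, Finset.sum_const, Finset.card_range, nsmul_eq_mul] at hgrid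
  have hlast : 1 / c ≤ partialMean A (w n) / w n := by
    rw [div_le_div_iff₀ hc₀ (by positivity), one_mul, mul_comm]
    exact (h _ (hmem n le_rfl)).le
  have hsum : (1 + n * (1 - Real.exp (-(L / n)))) / c ≤ 1 := by
    rw [add_div]
    linarith [measureReal_le_one (μ := A) (s := Ioc 0 (w n))]
  rw [div_le_one hc₀] at hsum
  linarith

lemma ofReal_le_iSup_ofReal_div {ι : Type*} {c : ℝ} {a b : ι → ℝ}
    (h : ∀ δ > 0, ∃ i, 0 < a i ∧ (c - δ) * b i ≤ a i) :
    ENNReal.ofReal c ≤ ⨆ i, ENNReal.ofReal (a i) / ENNReal.ofReal (b i) := by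
  refine le_of_forall_lt_imp_le_of_dense fun y hy => ?_
  have ht : y.toReal < c := ENNReal.toReal_lt_of_lt_ofReal hy
  obtain ⟨i, ha, hi⟩ := h (c - y.toReal) (by linarith)
  rw [sub_sub_cancel] at hi
  refine le_iSup_of_le i ?_
  rw [← ENNReal.ofReal_toReal (ne_top_of_lt hy)]
  rcases le_or_gt (b i) 0 with hb | hb
  · rw [ENNReal.ofReal_of_nonpos hb, ENNReal.div_zero (ENNReal.ofReal_pos.2 ha).ne']
    exact le_top
  · rw [ENNReal.le_div_iff_mul_le (Or.inl (ENNReal.ofReal_pos.2 hb).ne')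
      (Or.inl ENNReal.ofReal_ne_top), ← ENNReal.ofReal_mul ENNReal.toReal_nonneg]
    exact ENNReal.ofReal_le_ofReal hi

lemma exists_meanVarLe_mul_mrev_le_opt {A : Measure ℝ} (hA : IsPriceMech A) {m s c : ℝ}
    (hm : 0 < m) (hs : 0 < s) (hc : c < 1 + Real.log (1 + (s / m) ^ 2)) :
    ∃ F, MeanVarLe F m s ∧ 0 < opt F ∧ c * mrev A F ≤ opt F := by
  have := hA.1
  have hV : m < m + s ^ 2 / m := lt_add_of_pos_right m (by positivity)
  have hlog : Real.log ((m + s ^ 2 / m) / m) = Real.log (1 + (s / m) ^ 2) := by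
    congr 1
    field_simp
  obtain ⟨v, ⟨hmv, hvV⟩, hv⟩ := exists_mul_partialMean_le A hm hV (hlog ▸ hc)
  have hv₀ : 0 < v := hm.trans_le hmv
  have hvar : m * v - m ^ 2 ≤ s ^ 2 := by
    have := mul_le_mul_of_nonneg_left hvV hm.le
    rwa [mul_add, mul_div_cancel₀ _ hm.ne', ← sub_le_iff_le_add', ← sq] at this
  have hopt := le_opt_twoPoint hm hmv
  refine ⟨_, twoPoint_meanVarLe hm hmv hvar, hm.trans_le hopt, ?_⟩
  calc c * mrev A (twoPoint (m / v) v) = m / v * (c * partialMean A v) := by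
        rw [mrev_twoPoint A hA.2 (by positivity)]
        ring
    _ ≤ m / v * v := by gcongr
    _ = m := div_mul_cancel₀ _ hv₀.ne'
    _ ≤ _ := hopt

/-- For `μ, σ > 0` and `r = σ/μ`, every randomized pricing mechanism `A`
satisfies `sup_{F ∈ 𝔽_{μ,σ}} OPT(F)/REV(A;F) ≥ 1 + ln(1+r²)` (ratios in `ℝ≥0∞`, so
`c/0 = ∞` for `c > 0`); equivalently, for every `δ > 0` there is `F ∈ 𝔽_{μ,σ}` with
`OPT(F) ≥ (1 + ln(1+r²) − δ)·REV(A;F)`. -/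
theorem stmt9 (μ σ : ℝ) (hμ : 0 < μ) (hσ : 0 < σ) (r : ℝ) (hr : r = σ / μ) :
    ∀ A : Measure ℝ, IsPriceMech A →
      (ENNReal.ofReal (1 + Real.log (1 + r ^ 2)) ≤
        ⨆ F : {F : Measure ℝ // MeanVarLe F μ σ},
          ENNReal.ofReal (opt F.1) / ENNReal.ofReal (mrev A F.1)) ∧
      ∀ δ : ℝ, 0 < δ → ∃ F : Measure ℝ, MeanVarLe F μ σ ∧
        (1 + Real.log (1 + r ^ 2) - δ) * mrev A F ≤ opt F := by
  intro A hA
  subst hr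
  have hworst (δ : ℝ) (hδ : 0 < δ) := exists_meanVarLe_mul_mrev_le_opt hA hμ hσ
    (c := 1 + Real.log (1 + (σ / μ) ^ 2) - δ) (by linarith)
  refine ⟨ofReal_le_iSup_ofReal_div fun δ hδ => ?_, fun δ hδ => ?_⟩
  · obtain ⟨F, hF, hpos, hle⟩ := hworst δ hδ
    exact ⟨⟨F, hF⟩, hpos, hle⟩
  · obtain ⟨F, hF, -, hle⟩ := hworst δ hδ
    exact ⟨F, hF, hle⟩
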